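/- If a unary XFD r→s is violated in T̄_1 (i.e. T̄_1 does not strongly satisfy r→s), then the unary XFD p→s is violated in T̄_1. -/

import Mathlib

/-! Common framework for strong functional dependencies in XML (XFDs).

* Labels: element labels `elem n`, attribute names `attr n`, and the text
  symbol `text` (= `S`).  The distinguished label `root` is kept implicit:
  a path `root.l₁.….l_n` is represented by the list `[l₁,…,l_n]`, so the
  path `root` itself is `[]`. -/

inductive Lab where
  | elem (n : ℕ)
  | attr (n : ℕ)
  | text
deriving DecidableEq

/-- A path (the implicit leading label `root` is omitted). -/
abbrev XPath := List Lab

/-- `Last(p) ∈ E` (the label `root` of the root path counts as an element label). -/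
def LastIsElem (p : XPath) : Prop :=
  p = [] ∨ ∃ n, p.getLast? = some (Lab.elem n)

/-- `Last(p) ∈ A`. -/
def LastIsAttr (p : XPath) : Prop :=
  ∃ n, p.getLast? = some (Lab.attr n)

/-- `meet p q` is the maximal common prefix `p ∩ q` of two paths
    (`[]`, i.e. `root`, if they diverge immediately). -/
def meet : XPath → XPath → XPath
  | a :: as, b :: bs => if a = b then a :: meet as bs else []
  | _, _ => []

/-- Values of nodes: strings (for attribute and text nodes), node identities
    (element nodes are compared by node identity), and marked nulls
    (distinct marked nulls have distinct values). -/
inductive Val where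
  | str (s : String)
  | node (v : ℕ)
  | null (v : ℕ)
deriving DecidableEq

/-- Comparison of values used by `DeleteSameAtts` (on strings it is `≤`). -/
def ValLE : Val → Val → Prop
  | Val.str a, Val.str b => a ≤ b
  | a, b => a = b

/-- An (extended) XML tree `T = (V, lab, ele, att, val, v_r)`, presented via a
    parent function.  Marked nulls are the nodes with `isNull`; a plain XML
    tree is one satisfying `NoNulls`. -/
structure XTree where
  nodes : Finset ℕ
  root : ℕ
  root_mem : root ∈ nodes
  parent : ℕ → Option ℕ
  parent_root : parent root = none
  parent_mem : ∀ v ∈ nodes, v ≠ root → ∃ u ∈ nodes, parent v = some u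
  depth : ℕ → ℕ
  depth_parent : ∀ v u, parent v = some u → depth v = depth u + 1
  lab : ℕ → Lab
  isNull : ℕ → Prop
  root_not_null : ¬ isNull root
  val : ℕ → Val
  val_root : val root = Val.node root
  val_elem : ∀ v ∈ nodes, v ≠ root → (∃ n, lab v = Lab.elem n) → ¬ isNull v →
      val v = Val.node v
  val_null : ∀ v ∈ nodes, isNull v → val v = Val.null v
  val_str : ∀ v ∈ nodes, v ≠ root →
      (lab v = Lab.text ∨ ∃ n, lab v = Lab.attr n) → ¬ isNull v →
      ∃ s, val v = Val.str s

/-- A plain XML tree: no marked nulls. -/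
def NoNulls (T : XTree) : Prop := ∀ v, ¬ T.isNull v

/-- `Chain T v p vs` : `vs` is a downward chain of nodes hanging below `v`
    whose labels spell the path `p`. -/
inductive Chain (T : XTree) : ℕ → XPath → List ℕ → Prop
  | nil (v : ℕ) : Chain T v [] []
  | cons {v : ℕ} {l : Lab} {p : XPath} {w : ℕ} {ws : List ℕ} :
      w ∈ T.nodes → T.parent w = some v → T.lab w = l → Chain T w p ws →
      Chain T v (l :: p) (w :: ws)

/-- `vs` is (the non-root part of) a path instance over the path `p` in `T`. -/
def PathInst (T : XTree) (p : XPath) (vs : List ℕ) : Prop :=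
  Chain T T.root p vs

/-- The final node of the path instance `vs` (the root for the empty instance). -/
def endNode (T : XTree) (vs : List ℕ) : ℕ :=
  (T.root :: vs).getLast (by simp)

/-- `N(p)` : the set of final nodes of path instances over `p` in `T`. -/
def Nset (T : XTree) (p : XPath) : Set ℕ :=
  {v | ∃ vs, PathInst T p vs ∧ endNode T vs = v}

/-- `Nodes(x, p)` : final nodes of path instances over `p` passing through `x`. -/
def NodesOf (T : XTree) (x : ℕ) (p : XPath) : Set ℕ :=
  {w | ∃ vs, PathInst T p vs ∧ endNode T vs = w ∧ x ∈ T.root :: vs}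

/-- The node at depth `k` on the path instance `vs` (depth `0` is the root). -/
def nodeAt (T : XTree) (vs : List ℕ) (k : ℕ) : ℕ :=
  (T.root :: vs).getD k T.root

/-- An XML functional dependency `p₁, …, p_k → q`. -/
structure XFD where
  lhs : List XPath
  rhs : XPath

/-- The final nodes of two distinct path instances of the r.h.s. trigger the
    XFD condition: one of them is a null, or their values differ. -/
def PairTriggers (T : XTree) (a b : ℕ) : Prop :=
  T.isNull a ∨ T.isNull b ∨ T.val a ≠ T.val b

/-- The condition required of a single l.h.s. path `p` towards the XFD `… → q`
    for the two path instances `vs`, `vs'` of `q`:  with `x`/`y` the unique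
    nodes of the instances lying in `N(p ∩ q)`, if `Last(p) ∈ E` then `x ≠ y`,
    and otherwise no null lies in `Nodes(x,p)` or `Nodes(y,p)` and
    `val(Nodes(x,p)) ∩ val(Nodes(y,p)) = ∅`. -/
def SatOne (T : XTree) (p q : XPath) (vs vs' : List ℕ) : Prop :=
  (LastIsElem p ∧
    nodeAt T vs (meet p q).length ≠ nodeAt T vs' (meet p q).length) ∨
  (¬ LastIsElem p ∧
    (∀ w ∈ NodesOf T (nodeAt T vs (meet p q).length) p, ¬ T.isNull w) ∧
    (∀ w ∈ NodesOf T (nodeAt T vs' (meet p q).length) p, ¬ T.isNull w) ∧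
    (∀ a ∈ NodesOf T (nodeAt T vs (meet p q).length) p,
      ∀ b ∈ NodesOf T (nodeAt T vs' (meet p q).length) p, T.val a ≠ T.val b))

/-- Strong satisfaction of an XFD in a complete (extended) XML tree. -/
def Satisfies (T : XTree) (σ : XFD) : Prop :=
  (∃ p ∈ σ.lhs, p = σ.rhs) ∨
  ∀ vs vs', PathInst T σ.rhs vs → PathInst T σ.rhs vs' → vs ≠ vs' →
    PairTriggers T (endNode T vs) (endNode T vs') →
    ∃ p ∈ σ.lhs, SatOne T p σ.rhs vs vs'

/-- `(T, P)` is consistent. -/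
def Consistent (T : XTree) (P : Set XPath) : Prop :=
  (∀ p ∈ P, ∀ q ∈ P, ∀ i : Fin p.length,
      q.getLast? = some (p.get i) → q = p.take (i.1 + 1)) ∧
  (∀ v2 ∈ T.nodes, ∀ v1, T.parent v2 = some v1 →
    ∃ p ∈ P, ∃ j : Fin p.length, p.get j = T.lab v2 ∧
      (v1 = T.root ∨ ∃ i : Fin p.length, i.1 < j.1 ∧ p.get i = T.lab v1))

/-- `TP` is a minimal extension `T_P` of `T` with respect to the set of paths
    `P` : it extends `T` by marked nulls only, every node whose label occurs
    in a path `p ∈ P` lies on a (complete) path instance over `p`, and every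
    added null lies on a path instance over some `p ∈ P`. -/
structure IsMinExt (T : XTree) (P : Set XPath) (TP : XTree) : Prop where
  nodes_subset : ∀ v ∈ T.nodes, v ∈ TP.nodes
  root_eq : TP.root = T.root
  old_not_null : ∀ v ∈ T.nodes, ¬ TP.isNull v
  new_null : ∀ v ∈ TP.nodes, v ∉ T.nodes → TP.isNull v
  parent_eq : ∀ v ∈ T.nodes, TP.parent v = T.parent v
  lab_eq : ∀ v ∈ T.nodes, TP.lab v = T.lab v
  val_eq : ∀ v ∈ T.nodes, TP.val v = T.val v
  complete : ∀ v ∈ TP.nodes, v ≠ TP.root → ∀ p ∈ P, TP.lab v ∈ p →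
      ∃ vs, PathInst TP p vs ∧ v ∈ vs
  minimal : ∀ v ∈ TP.nodes, v ∉ T.nodes → ∃ p ∈ P, ∃ vs, PathInst TP p vs ∧ v ∈ vs

/-- `T` is complete w.r.t. `P` : `(T, P)` is consistent and `T = T_P`. -/
def CompleteWrt (T : XTree) (P : Set XPath) : Prop :=
  Consistent T P ∧ IsMinExt T P T

/-- Derivability of an XFD from a set of XFDs using axioms A1–A8. -/
inductive Derives (Sg : Set XFD) : XFD → Prop
  | mem {σ : XFD} : σ ∈ Sg → Derives Sg σ
  | A1 {ps : List XPath} {p : XPath} : p ∈ ps → Derives Sg ⟨ps, p⟩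
  | A2 {ps : List XPath} {q p : XPath} :
      Derives Sg ⟨ps, q⟩ → Derives Sg ⟨p :: ps, q⟩
  | A3 {ps : List XPath} {q s : XPath} :
      Derives Sg ⟨ps, q⟩ → Derives Sg ⟨[q], s⟩ → Derives Sg ⟨ps, s⟩
  | A4 {ps : List XPath} {q p : XPath} :
      Derives Sg ⟨ps, q⟩ → (∀ pi ∈ ps, meet pi q = []) → Derives Sg ⟨[p], q⟩
  | A5 {p q p' : XPath} :
      Derives Sg ⟨[p], q⟩ → meet p q <+: p' → (p' <+: p ∨ p' <+: q) →
      Derives Sg ⟨[p'], q⟩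
  | A6 {p q : XPath} : LastIsElem p → q <+: p → Derives Sg ⟨[p], q⟩
  | A7 {q : XPath} : LastIsAttr q → Derives Sg ⟨[q.dropLast], q⟩
  | A8 {p : XPath} : Derives Sg ⟨[p], []⟩

/-- A set of unary XFDs `r → s` is represented as a set of pairs `(r, s)`;
    this turns it into a set of `XFD`s. -/
def toXFDs (Sg : Set (XPath × XPath)) : Set XFD :=
  {σ : XFD | ∃ rs ∈ Sg, σ = ⟨[rs.1], rs.2⟩}

/-- `P_Σ` : the set of paths appearing on either side of an XFD in `Σ`. -/
def PathsOf (Sg : Set (XPath × XPath)) : Set XPath :=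
  {t | ∃ u, (t, u) ∈ Sg ∨ (u, t) ∈ Sg}

/-- `P⁺` as computed by Algorithm 2 on input `Σ` (unary XFDs) and a path `p`:
    the closure of `{p, root}` (together with `Anc(p)` when `Last(p) ∈ E`, and
    attribute extensions of all these) under the rules of the repeat loop. -/
inductive PPlus (Sg : Set (XPath × XPath)) (p : XPath) : XPath → Prop
  | self : PPlus Sg p p
  | rt : PPlus Sg p []
  | anc {q : XPath} : LastIsElem p → q <+: p → q ≠ p → PPlus Sg p q
  | attSelf (a : ℕ) : PPlus Sg p (p ++ [Lab.attr a])
  | attRoot (a : ℕ) : PPlus Sg p [Lab.attr a]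
  | attAnc {q : XPath} (a : ℕ) :
      LastIsElem p → q <+: p → q ≠ p → PPlus Sg p (q ++ [Lab.attr a])
  | ruleVia {r s p1 : XPath} : (r, s) ∈ Sg → PPlus Sg p p1 →
      meet r s <+: p1 → (p1 <+: r ∨ p1 <+: s) → PPlus Sg p s
  | ruleRoot {r s : XPath} : (r, s) ∈ Sg → meet r s = [] → PPlus Sg p s
  | addAnc {r s q : XPath} : (r, s) ∈ Sg → PPlus Sg p s → LastIsElem s →
      q <+: s → q ≠ s → PPlus Sg p q
  | addAtt {r s : XPath} (a : ℕ) : (r, s) ∈ Sg → PPlus Sg p s → LastIsElem s →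
      PPlus Sg p (s ++ [Lab.attr a])

/-- The set of unary XFDs `{p → q : q ∈ P⁺}`. -/
def PPlusFDs (Sg : Set (XPath × XPath)) (p : XPath) : Set (XPath × XPath) :=
  {rs | rs.1 = p ∧ PPlus Sg p rs.2}

/-- One step of Algorithm 1 of the first kind (`Last(q) ∉ E`): choose
    `p → q ∈ Σ`, nodes `v1, v2 ∈ N(p)` with equal values and `v3, v4 ∈ N(q)`
    with `val v3 < val v4`, and set `val v4 := val v3`. -/
def ValStep (Sg : Set (XPath × XPath)) (T T' : XTree) : Prop :=
  ∃ pq ∈ Sg, ¬ LastIsElem pq.2 ∧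
  ∃ v1 ∈ Nset T pq.1, ∃ v2 ∈ Nset T pq.1, T.val v1 = T.val v2 ∧
  ∃ v3 ∈ Nset T pq.2, ∃ v4 ∈ Nset T pq.2,
    (∃ s3 s4 : String, T.val v3 = Val.str s3 ∧ T.val v4 = Val.str s4 ∧ s3 < s4) ∧
    T'.nodes = T.nodes ∧ T'.root = T.root ∧ T'.parent = T.parent ∧
    T'.lab = T.lab ∧ T'.isNull = T.isNull ∧
    T'.val = Function.update T.val v4 (T.val v3)

/-- One step of Algorithm 1 of the second kind (`Last(q) ∈ E`): choose
    `p → q ∈ Σ`, nodes `v1, v2 ∈ N(p)` with equal values and two path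
    instances of `q` with distinct final nodes, agreeing exactly up to depth
    `c`; merge the second instance into the first (the merge map `φ`),
    deleting the merged nodes and (`DeleteSameAtts`) duplicate attribute
    children `A` of merged nodes, keeping for each deleted attribute node a
    twin with `ValLE`-smaller value. -/
def MergeStep (Sg : Set (XPath × XPath)) (T T' : XTree) : Prop :=
  ∃ pq ∈ Sg, LastIsElem pq.2 ∧
  ∃ v1 ∈ Nset T pq.1, ∃ v2 ∈ Nset T pq.1, T.val v1 = T.val v2 ∧
  ∃ vs3 vs4 : List ℕ, PathInst T pq.2 vs3 ∧ PathInst T pq.2 vs4 ∧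
    endNode T vs3 ≠ endNode T vs4 ∧
  ∃ c : ℕ, 0 < c ∧ c ≤ vs4.length ∧
    (T.root :: vs3).take c = (T.root :: vs4).take c ∧
    (∀ w ∈ (T.root :: vs4).drop c, w ∉ (T.root :: vs3).drop c) ∧
  ∃ φ : ℕ → ℕ,
    (∀ i : ℕ, c ≤ i →
      ∀ (h3 : i < (T.root :: vs3).length) (h4 : i < (T.root :: vs4).length),
        φ ((T.root :: vs4).get ⟨i, h4⟩) = (T.root :: vs3).get ⟨i, h3⟩) ∧
    (∀ v, v ∉ (T.root :: vs4).drop c → φ v = v) ∧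
  ∃ A : Set ℕ,
    (∀ w ∈ A, w ∈ T.nodes ∧ (∃ a, T.lab w = Lab.attr a) ∧
      w ∉ (T.root :: vs4).drop c ∧
      ∃ w', w' ∈ T.nodes ∧ w' ∉ A ∧ w' ∉ (T.root :: vs4).drop c ∧ w' ≠ w ∧
        T.lab w' = T.lab w ∧
        Option.map φ (T.parent w') = Option.map φ (T.parent w) ∧
        ValLE (T.val w') (T.val w)) ∧
    (∀ v : ℕ, v ∈ T'.nodes ↔
        (v ∈ T.nodes ∧ v ∉ (T.root :: vs4).drop c ∧ v ∉ A)) ∧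
    T'.root = T.root ∧
    (∀ v ∈ T'.nodes, T'.parent v = Option.map φ (T.parent v)) ∧
    (∀ v ∈ T'.nodes, T'.lab v = T.lab v) ∧
    (∀ v ∈ T'.nodes, T'.val v = T.val v) ∧
    (∀ v ∈ T'.nodes, (T'.isNull v ↔ T.isNull v)) ∧
    (∀ w ∈ T'.nodes, ∀ w' ∈ T'.nodes, (∃ a, T.lab w = Lab.attr a) →
      T.lab w' = T.lab w →
      Option.map φ (T.parent w') = Option.map φ (T.parent w) → w' = w)

/-- A single step of Algorithm 1 (the chase). -/
def ChaseStep (Sg : Set (XPath × XPath)) (T T' : XTree) : Prop :=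
  ValStep Sg T T' ∨ MergeStep Sg T T'

/-- `Tb` is an output of Algorithm 1 on input `Σ` and `T`: reachable from `T`
    by chase steps, with no further step applicable. -/
def ChaseResult (Sg : Set (XPath × XPath)) (T Tb : XTree) : Prop :=
  Relation.ReflTransGen (ChaseStep Sg) T Tb ∧ ∀ T'', ¬ ChaseStep Sg Tb T''

/-- `T` contains exactly two (distinct) path instances over `q`. -/
def ExactlyTwoInsts (T : XTree) (q : XPath) : Prop :=
  ∃ vs1 vs2, vs1 ≠ vs2 ∧ PathInst T q vs1 ∧ PathInst T q vs2 ∧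
    ∀ vs, PathInst T q vs → vs = vs1 ∨ vs = vs2

/-- `T` contains exactly one path instance over `q`. -/
def ExactlyOneInst (T : XTree) (q : XPath) : Prop :=
  ∃ vs, PathInst T q vs ∧ ∀ vs', PathInst T q vs' → vs' = vs

/-- The tree `T₀` used in Case 1 (`Last(p) ∉ E`): complete w.r.t. `P_Σ`,
    with exactly two path instances of every path of `P_Σ` other than `root`,
    the two final nodes of the instances of `p` having equal values and the
    final nodes of the two instances of every other path having distinct
    values. -/
def IsT0 (Sg : Set (XPath × XPath)) (p : XPath) (T : XTree) : Prop :=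
  NoNulls T ∧ CompleteWrt T (PathsOf Sg) ∧
  (∀ q ∈ PathsOf Sg, q ≠ [] → ExactlyTwoInsts T q) ∧
  (∀ vs1 vs2, PathInst T p vs1 → PathInst T p vs2 →
      T.val (endNode T vs1) = T.val (endNode T vs2)) ∧
  (∀ q ∈ PathsOf Sg, q ≠ p → ∀ vs1 vs2, PathInst T q vs1 → PathInst T q vs2 →
      vs1 ≠ vs2 → T.val (endNode T vs1) ≠ T.val (endNode T vs2))

/-- The tree `T₁` used in Case 2 (`Last(p) ∈ E`): complete w.r.t. `P_Σ`, with
    exactly one path instance of `p`, of each prefix of `p` and of each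
    attribute path (in `P_Σ`) whose parent is a prefix of `p`, exactly two
    path instances of every other path of `P_Σ`, and all node values
    distinct. -/
def IsT1 (Sg : Set (XPath × XPath)) (p : XPath) (T : XTree) : Prop :=
  NoNulls T ∧ CompleteWrt T (PathsOf Sg) ∧
  (∀ q : XPath, q <+: p → ExactlyOneInst T q) ∧
  (∀ q ∈ PathsOf Sg, LastIsAttr q → q.dropLast <+: p → ExactlyOneInst T q) ∧
  (∀ q ∈ PathsOf Sg, q ≠ [] →
      ¬ (q <+: p ∨ (LastIsAttr q ∧ q.dropLast <+: p)) → ExactlyTwoInsts T q) ∧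
  (∀ v ∈ T.nodes, ∀ w ∈ T.nodes, T.val v = T.val w → v = w)

/-! ### Auxiliary machinery for the proof -/

/-- End node of a chain hung below `a`. -/
def endFrom (a : ℕ) (ws : List ℕ) : ℕ := (a :: ws).getLast (by simp)

lemma endFrom_nil (a : ℕ) : endFrom a [] = a := rfl

lemma endFrom_cons (a w : ℕ) (ws : List ℕ) :
    endFrom a (w :: ws) = endFrom w ws := by
  cases ws with
  | nil => rfl
  | cons b bs =>
    unfold endFrom
    rw [List.getLast_cons (by simp)]

lemma endFrom_snoc (a v : ℕ) (ws : List ℕ) : endFrom a (ws ++ [v]) = v := by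
  induction ws generalizing a with
  | nil => simp [endFrom]
  | cons w t ih => rw [List.cons_append, endFrom_cons, ih]

lemma chain_cons_inv {T : XTree} {a w : ℕ} {t : List ℕ} {q : XPath}
    (h : Chain T a q (w :: t)) :
    ∃ p, q = T.lab w :: p ∧ w ∈ T.nodes ∧ T.parent w = some a ∧ Chain T w p t := by
  cases h with
  | cons hw hpw hlw hch => exact ⟨_, by rw [hlw], hw, hpw, hch⟩

lemma endNode_eq (T : XTree) (ws : List ℕ) : endNode T ws = endFrom T.root ws := rfl

lemma chain_length {T : XTree} {a : ℕ} {q : XPath} {ws : List ℕ}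
    (h : Chain T a q ws) : ws.length = q.length := by
  induction h with
  | nil => rfl
  | cons _ _ _ _ ih => simpa using ih

lemma chain_nil_right {T : XTree} {a : ℕ} {q : XPath}
    (h : Chain T a q []) : q = [] := by cases h; rfl

lemma chain_snoc {T : XTree} {a : ℕ} {q : XPath} {ws : List ℕ} {v : ℕ} {l : Lab}
    (h : Chain T a q ws) (hv : v ∈ T.nodes)
    (hpar : T.parent v = some (endFrom a ws)) (hlab : T.lab v = l) :
    Chain T a (q ++ [l]) (ws ++ [v]) := by
  induction h with
  | nil b =>
    simp only [endFrom_nil] at hpar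
    exact Chain.cons hv hpar hlab (Chain.nil v)
  | cons hw hpw hlw hch ih =>
    rw [endFrom_cons] at hpar
    exact Chain.cons hw hpw hlw (ih hpar)

lemma chain_snoc_inv {T : XTree} {a : ℕ} {q : XPath} {ws : List ℕ}
    (h : Chain T a q ws) (hne : ws ≠ []) :
    ∃ q₁ l ws₁ v, q = q₁ ++ [l] ∧ ws = ws₁ ++ [v] ∧ Chain T a q₁ ws₁ ∧
      v ∈ T.nodes ∧ T.parent v = some (endFrom a ws₁) ∧ T.lab v = l := by
  induction h with
  | nil b => exact absurd rfl hne
  | @cons b l p w ws hw hpw hlw hch ih =>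
    rcases ws with _ | ⟨w', ws'⟩
    · have hp : p = [] := chain_nil_right hch
      exact ⟨[], l, [], w, by simp [hp], by simp, Chain.nil b, hw, by simpa [endFrom_nil] using hpw, hlw⟩
    · obtain ⟨q₁, l', ws₁, v, hq, hws, hch₁, hvn, hvp, hvl⟩ := ih (by simp)
      refine ⟨l :: q₁, l', w :: ws₁, v, by simp [hq], by simp [hws],
        Chain.cons hw hpw hlw hch₁, hvn, ?_, hvl⟩
      rwa [endFrom_cons]

lemma chain_take {T : XTree} {a : ℕ} {q : XPath} {ws : List ℕ}
    (h : Chain T a q ws) (k : ℕ) : Chain T a (q.take k) (ws.take k) := by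
  induction h generalizing k with
  | nil b => simpa using Chain.nil b
  | cons hw hpw hlw hch ih =>
    cases k with
    | zero => simpa using Chain.nil _
    | succ k => exact Chain.cons hw hpw hlw (ih k)

lemma chain_depth {T : XTree} {a : ℕ} {q : XPath} {ws : List ℕ}
    (h : Chain T a q ws) : T.depth (endFrom a ws) = T.depth a + ws.length := by
  induction h with
  | nil b => simp [endFrom_nil]
  | @cons b l p w ws hw hpw hlw hch ih =>
    rw [endFrom_cons, ih, T.depth_parent w b hpw]
    simp [Nat.add_assoc, Nat.add_comm 1]

lemma chain_last_parent {T : XTree} {a : ℕ} {q : XPath} {ws : List ℕ}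
    (h : Chain T a q ws) (hne : ws ≠ []) :
    ∃ u, T.parent (endFrom a ws) = some u := by
  induction h with
  | nil b => exact absurd rfl hne
  | @cons b l p w ws hw hpw hlw hch ih =>
    rcases ws with _ | ⟨w', ws'⟩
    · exact ⟨b, by simpa [endFrom_nil, endFrom_cons] using hpw⟩
    · rw [endFrom_cons]; exact ih (by simp)

lemma chain_unique_aux {T : XTree} :
    ∀ (ws ws' : List ℕ) (a b : ℕ) (q q' : XPath),
      Chain T a q ws → Chain T b q' ws' → ws ≠ [] → ws' ≠ [] →
      endFrom a ws = endFrom b ws' → ws.length = ws'.length →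
      a = b ∧ q = q' ∧ ws = ws' := by
  intro ws
  induction ws with
  | nil => intro ws' a b q q' _ _ h; exact absurd rfl h
  | cons w t ih =>
    intro ws' a b q q' h h' _ hne' hend hlen
    rcases ws' with _ | ⟨w', t'⟩
    · exact absurd rfl hne'
    obtain ⟨p, hq, hw, hpw, hch⟩ := chain_cons_inv h
    obtain ⟨p', hq', hw', hpw', hch'⟩ := chain_cons_inv h'
    rcases t with _ | ⟨x, xs⟩
    · have ht' : t' = [] := by simpa using hlen.symm
      subst ht'
      have hww : w = w' := by simpa [endFrom_nil, endFrom_cons] using hend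
      subst hww
      have hab : a = b := Option.some.inj (hpw.symm.trans hpw')
      have hp : p = [] := chain_nil_right hch
      have hp' : p' = [] := chain_nil_right hch'
      subst hp; subst hp'
      exact ⟨hab, by rw [hq, hq'], rfl⟩
    · have ht' : t' ≠ [] := by intro hh; subst hh; simp at hlen
      rw [endFrom_cons, endFrom_cons] at hend
      obtain ⟨hww, hqq, htt⟩ := ih t' w w' _ _ hch hch' (by simp) ht'
        hend (by simpa using hlen)
      subst hww
      have hab : a = b := Option.some.inj (hpw.symm.trans hpw')
      exact ⟨hab, by rw [hq, hq', hqq], by rw [htt]⟩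

lemma root_chain_unique {T : XTree} {q q' : XPath} {ws ws' : List ℕ}
    (h : Chain T T.root q ws) (h' : Chain T T.root q' ws')
    (hend : endFrom T.root ws = endFrom T.root ws') :
    q = q' ∧ ws = ws' := by
  rcases eq_or_ne ws [] with hws | hws
  · subst hws
    rcases eq_or_ne ws' [] with hws' | hws'
    · subst hws'
      exact ⟨(chain_nil_right h).trans (chain_nil_right h').symm, rfl⟩
    · obtain ⟨u, hu⟩ := chain_last_parent h' hws'
      rw [← hend, endFrom_nil, T.parent_root] at hu
      exact absurd hu (by simp)
  · rcases eq_or_ne ws' [] with hws' | hws'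
    · subst hws'
      obtain ⟨u, hu⟩ := chain_last_parent h hws
      rw [hend, endFrom_nil, T.parent_root] at hu
      exact absurd hu (by simp)
    · have hd := chain_depth h
      have hd' := chain_depth h'
      rw [hend] at hd
      have hlen : ws.length = ws'.length := by omega
      obtain ⟨_, hq, hw⟩ := chain_unique_aux ws ws' _ _ _ _ h h' hws hws' hend hlen
      exact ⟨hq, hw⟩

/-- At most one path instance over `q`. -/
def AtMostOne (T : XTree) (q : XPath) : Prop :=
  ∀ ws ws', PathInst T q ws → PathInst T q ws' → ws = ws'

lemma endFrom_take (a : ℕ) (l : List ℕ) (k : ℕ) (h : k ≤ l.length) :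
    endFrom a (l.take k) = (a :: l).getD k a := by
  induction k generalizing a l with
  | zero => simp [endFrom_nil]
  | succ k ih =>
    rcases l with _ | ⟨w, t⟩
    · simp at h
    · have hk : k ≤ t.length := by simpa using h
      rw [List.take_succ_cons, endFrom_cons, ih w t hk]
      have h1 : (w :: t).getD k w = (w :: t)[k]'(by simp; omega) :=
        List.getD_eq_getElem _ _ (by simp; omega)
      have h2 : (a :: w :: t).getD (k + 1) a = (w :: t)[k]'(by simp; omega) := by
        rw [List.getD_eq_getElem _ _ (by simp; omega)]
        simp
      rw [h1, h2]

lemma endFrom_take_getElem (a : ℕ) (l : List ℕ) (i : ℕ) (h : i < (a :: l).length) :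
    endFrom a (l.take i) = (a :: l)[i] := by
  rw [endFrom_take a l i (by simpa using Nat.lt_succ_iff.mp (by simpa using h)),
    List.getD_eq_getElem _ _ h]

lemma valstep_preserves {Sg : Set (XPath × XPath)} {T T' : XTree}
    (h : ValStep Sg T T') {q : XPath} (hA : AtMostOne T q) : AtMostOne T' q := by
  obtain ⟨pq, _, _, v1, _, v2, _, _, v3, _, v4, _, _, hn, hr, hpar, hlab, _, _⟩ := h
  have key : ∀ a p ws, Chain T' a p ws → Chain T a p ws := by
    intro a p ws hch
    induction hch with
    | nil b => exact Chain.nil b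
    | cons hw hpw hlw hch ih =>
      exact Chain.cons (hn ▸ hw) (hpar ▸ hpw) (hlab ▸ hlw) ih
  intro ws ws' h1 h2
  have k1 := key T'.root q ws h1
  have k2 := key T'.root q ws' h2
  rw [hr] at k1 k2
  exact hA ws ws' k1 k2

lemma mergestep_preserves {Sg : Set (XPath × XPath)} {T T' : XTree}
    (h : MergeStep Sg T T') {q : XPath} (hA : AtMostOne T q) : AtMostOne T' q := by
  obtain ⟨pq, _, _, v1, _, v2, _, _, vs3, vs4, hv3, hv4, _, c, hc0, hcle, htake, hdisj,
    φ, hφget, hφid, A, _, hnodes, hroot, hpar, hlab, _, _, _⟩ := h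
  have hlen3 : vs3.length = pq.2.length := chain_length hv3
  have hlen34 : (T.root :: vs3).length = (T.root :: vs4).length := by
    simp [hlen3, chain_length hv4]
  -- KEY: every chain from the root in T' yields a chain in T with the same end node
  have key : ∀ n p ws, ws.length ≤ n → Chain T' T'.root p ws →
      ∃ ws₀, Chain T T.root p ws₀ ∧ endFrom T.root ws₀ = endFrom T'.root ws := by
    intro n
    induction n with
    | zero =>
      intro p ws hlen hch
      have : ws = [] := by simpa using List.length_eq_zero_iff.mp (Nat.le_zero.mp hlen)
      subst this
      have := chain_nil_right hch
      subst this
      exact ⟨[], Chain.nil _, by simp [endFrom_nil, hroot]⟩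
    | succ n ih =>
      intro p ws hlen hch
      rcases eq_or_ne ws [] with hws | hws
      · subst hws
        have := chain_nil_right hch
        subst this
        exact ⟨[], Chain.nil _, by simp [endFrom_nil, hroot]⟩
      obtain ⟨q₁, l, ws₁, v, hq, hwseq, hch₁, hvn, hvp, hvl⟩ := chain_snoc_inv hch hws
      have hlen₁ : ws₁.length ≤ n := by
        subst hwseq; simp at hlen; omega
      obtain ⟨ws₂, hch₂, hend₂⟩ := ih q₁ ws₁ hlen₁ hch₁
      -- T-parent of v
      have hvp' : Option.map φ (T.parent v) = some (endFrom T'.root ws₁) := by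
        rw [← hpar v hvn, hvp]
      obtain ⟨w, hw1, hw2⟩ : ∃ w, T.parent v = some w ∧ φ w = endFrom T'.root ws₁ := by
        rcases hTp : T.parent v with _ | w
        · rw [hTp] at hvp'; simp at hvp'
        · rw [hTp] at hvp'; exact ⟨w, rfl, by simpa using hvp'⟩
      have hvT : v ∈ T.nodes := ((hnodes v).mp hvn).1
      have hvlT : T.lab v = l := by rw [← hlab v hvn]; exact hvl
      by_cases hwd : w ∈ (T.root :: vs4).drop c
      · -- w is a merged node on vs4
        obtain ⟨j, hj, hjw⟩ := List.mem_iff_getElem.mp hwd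
        have hi4 : c + j < (T.root :: vs4).length := by
          have := (List.length_drop : (List.drop c (T.root :: vs4)).length = _) ▸ hj
          omega
        have hwe : w = (T.root :: vs4)[c + j] := by
          rw [← hjw, List.getElem_drop]
        have hi3 : c + j < (T.root :: vs3).length := by rwa [hlen34]
        have hx : φ w = (T.root :: vs3)[c + j] := by
          rw [hwe]
          exact hφget (c + j) (Nat.le_add_right c j) hi3 hi4
        -- the take of vs3 is a chain in T ending at φ w = endFrom T'.root ws₁
        have hch3 : Chain T T.root (pq.2.take (c + j)) (vs3.take (c + j)) :=
          chain_take hv3 (c + j)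
        have hend3 : endFrom T.root (vs3.take (c + j)) = (T.root :: vs3)[c + j] :=
          endFrom_take_getElem _ _ _ hi3
        have huni := root_chain_unique hch₂ hch3
          (by rw [hend₂, ← hw2, hx, hend3])
        -- the take of vs4 is a chain in T ending at w
        have hch4 : Chain T T.root (pq.2.take (c + j)) (vs4.take (c + j)) :=
          chain_take hv4 (c + j)
        have hend4 : endFrom T.root (vs4.take (c + j)) = w := by
          rw [endFrom_take_getElem _ _ _ hi4, hwe]
        refine ⟨vs4.take (c + j) ++ [v], ?_, ?_⟩
        · rw [hq, huni.1]
          exact chain_snoc hch4 hvT (by rw [hend4, hw1]) hvlT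
        · rw [endFrom_snoc, hwseq, endFrom_snoc]
      · -- φ w = w
        have hφw : φ w = w := hφid w hwd
        refine ⟨ws₂ ++ [v], ?_, ?_⟩
        · rw [hq]
          exact chain_snoc hch₂ hvT (by rw [hend₂, ← hw2, hφw, hw1]) hvlT
        · rw [endFrom_snoc, hwseq, endFrom_snoc]
  intro ws ws' h1 h2
  obtain ⟨c1, hc1, he1⟩ := key ws.length q ws le_rfl h1
  obtain ⟨c2, hc2, he2⟩ := key ws'.length q ws' le_rfl h2
  have hcc : c1 = c2 := hA c1 c2 hc1 hc2
  have hend : endFrom T'.root ws = endFrom T'.root ws' := by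
    rw [← he1, ← he2, hcc]
  exact (root_chain_unique h1 h2 hend).2

lemma chasestep_preserves {Sg : Set (XPath × XPath)} {T T' : XTree}
    (h : ChaseStep Sg T T') {q : XPath} (hA : AtMostOne T q) : AtMostOne T' q :=
  h.elim (fun hv => valstep_preserves hv hA) (fun hm => mergestep_preserves hm hA)

lemma meet_prefix_left : ∀ p q : XPath, meet p q <+: p := by
  intro p
  induction p with
  | nil => intro q; cases q <;> simp [meet]
  | cons a as ih =>
    intro q
    cases q with
    | nil => simp [meet]
    | cons b bs =>
      by_cases hab : a = b
      · subst hab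
        have hm : meet (a :: as) (a :: bs) = a :: meet as bs := by simp [meet]
        rw [hm]
        exact List.cons_prefix_cons.mpr ⟨rfl, ih bs⟩
      · simp [meet, hab]

lemma meet_prefix_right : ∀ p q : XPath, meet p q <+: q := by
  intro p
  induction p with
  | nil => intro q; cases q <;> simp [meet]
  | cons a as ih =>
    intro q
    cases q with
    | nil => simp [meet]
    | cons b bs =>
      by_cases hab : a = b
      · subst hab
        have hm : meet (a :: as) (a :: bs) = a :: meet as bs := by simp [meet]
        rw [hm]
        exact List.cons_prefix_cons.mpr ⟨rfl, ih bs⟩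
      · simp [meet, hab]

lemma chase_preserves {Sg : Set (XPath × XPath)} {T Tb : XTree}
    (hc : Relation.ReflTransGen (ChaseStep Sg) T Tb) {q : XPath}
    (hA : AtMostOne T q) : AtMostOne Tb q := by
  induction hc with
  | refl => exact hA
  | tail _ st ih => exact chasestep_preserves st ih

/-- **Lemma `L:b4`.**
If a unary XFD `r → s` is violated in `T̄₁`, then the unary XFD `p → s` is
violated in `T̄₁`. -/
theorem Tbar1_violation_transfer (Sg : Set (XPath × XPath)) (p : XPath)
    (hp : LastIsElem p) (T1 Tb : XTree) (h1 : IsT1 Sg p T1)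
    (hc : ChaseResult (PPlusFDs Sg p) T1 Tb)
    (r s : XPath) (hviol : ¬ Satisfies Tb ⟨[r], s⟩) :
    ¬ Satisfies Tb ⟨[p], s⟩ := by
  have hAMO : ∀ q : XPath, q <+: p → AtMostOne Tb q := by
    intro q hq
    obtain ⟨ws, _, huniq⟩ := h1.2.2.1 q hq
    exact chase_preserves hc.1 (fun w1 w2 a b => (huniq w1 a).trans (huniq w2 b).symm)
  simp only [Satisfies, List.mem_singleton, exists_eq_left] at hviol
  push_neg at hviol
  obtain ⟨hrs, vs, vs', hvs, hvs', hne, htrig, -⟩ := hviol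
  have hps : p ≠ s := by
    intro h
    subst h
    exact hne (hAMO p List.prefix_rfl vs vs' hvs hvs')
  have hms : meet p s <+: s := meet_prefix_right p s
  have hmp : meet p s <+: p := meet_prefix_left p s
  have hk : (meet p s).length ≤ s.length := hms.length_le
  have hlvs : vs.length = s.length := chain_length hvs
  have hlvs' : vs'.length = s.length := chain_length hvs'
  have htk : s.take (meet p s).length = meet p s :=
    (List.prefix_iff_eq_take.mp hms).symm
  have hins : PathInst Tb (meet p s) (vs.take (meet p s).length) := by
    have := chain_take hvs (meet p s).length
    rwa [htk] at this
  have hins' : PathInst Tb (meet p s) (vs'.take (meet p s).length) := by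
    have := chain_take hvs' (meet p s).length
    rwa [htk] at this
  have heq := hAMO (meet p s) hmp _ _ hins hins'
  have hnode : nodeAt Tb vs (meet p s).length = nodeAt Tb vs' (meet p s).length := by
    unfold nodeAt
    rw [← endFrom_take Tb.root vs (meet p s).length (by omega),
      ← endFrom_take Tb.root vs' (meet p s).length (by omega), heq]
  intro hsat
  rcases hsat with h | h
  · simp only [List.mem_singleton, exists_eq_left] at h
    exact hps h
  · obtain ⟨x, hx, hsat1⟩ := h vs vs' hvs hvs' hne htrig
    simp only [List.mem_singleton] at hx
    subst hx
    rcases hsat1 with ⟨-, hne2⟩ | ⟨hnp, -⟩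
    · exact hne2 hnode
    · exact hnp hp
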